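/- Let R = (rᵢⱼ) be a real 3×3 matrix with RᵀR = I and det R = 1, suppose r₃₃ ≠ 1, let c₃ ∈ ℝ, and set c := (r₃₁c₃/(r₃₃−1), r₃₂c₃/(r₃₃−1), c₃) ∈ ℝ³. Then the fundamental matrix F := −[c]×·Rᵀ equals (c₃/(r₃₃−1)) · [−r₁₂−r₂₁, r₁₁−r₂₂, −r₃₂; r₁₁−r₂₂, r₁₂+r₂₁, r₃₁; −r₂₃, r₁₃, 0]. In particular, the top-left 2×2 block F₂ₓ₂ of F is a scalar multiple of a 2×2 orthogonal matrix of determinant −1, so F₂ₓ₂ᵀF₂ₓ₂ is a scalar multiple of the 2×2 identity. -/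
import Mathlib


open Matrix

/-- The skew-symmetric cross-product matrix [t]× for t ∈ ℝ³. -/
def crossMat (t : Fin 3 → ℝ) : Matrix (Fin 3) (Fin 3) ℝ :=
  !![0, -t 2, t 1; t 2, 0, -t 0; -t 1, t 0, 0]

lemma fund_aux (r00 r01 r02 r10 r11 r12 r20 r21 r22 c₃ : ℝ)
    (hd : r22 - 1 ≠ 0)
    (c00 : r11 * r22 - r12 * r21 = r00)
    (c01 : -(r10 * r22) + r12 * r20 = r01)
    (c10 : -(r01 * r22) + r02 * r21 = r10)
    (c11 : r00 * r22 - r02 * r20 = r11)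
    (c02 : r10 * r21 - r11 * r20 = r02)
    (c12 : -(r00 * r21) + r01 * r20 = r12) :
    -(crossMat ![r20 * c₃ / (r22 - 1), r21 * c₃ / (r22 - 1), c₃]) *
        (!![r00, r01, r02; r10, r11, r12; r20, r21, r22])ᵀ =
      (c₃ / (r22 - 1)) •
        !![-r01 - r10, r00 - r11, -r21;
           r00 - r11,  r01 + r10, r20;
           -r12,       r02,       0] := by
  ext i j
  fin_cases i <;> fin_cases j <;>
    simp [crossMat, Matrix.mul_apply, Fin.sum_univ_three, Matrix.transpose_apply, Matrix.vecHead, Matrix.vecTail] <;>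
    field_simp <;>
    first
      | ring1
      | linear_combination c₃ * c00
      | linear_combination -c₃ * c00
      | linear_combination c₃ * c01
      | linear_combination -c₃ * c01
      | linear_combination c₃ * c10
      | linear_combination -c₃ * c10
      | linear_combination c₃ * c11
      | linear_combination -c₃ * c11
      | linear_combination c₃ * c02
      | linear_combination -c₃ * c02
      | linear_combination c₃ * c12
      | linear_combination -c₃ * c12

/-- for R ∈ SO(3) with r₃₃ ≠ 1 and camera center
c = (r₃₁c₃/(r₃₃−1), r₃₂c₃/(r₃₃−1), c₃), the fundamental matrix F = −[c]×Rᵀ equals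
(c₃/(r₃₃−1))·[−r₁₂−r₂₁, r₁₁−r₂₂, −r₃₂; r₁₁−r₂₂, r₁₂+r₂₁, r₃₁; −r₂₃, r₁₃, 0];
in particular F₂ₓ₂ is a scalar multiple of an orthogonal matrix of determinant −1, so
F₂ₓ₂ᵀF₂ₓ₂ is a scalar multiple of the identity. -/
theorem fundamental_matrix_formula_minus (R : Matrix (Fin 3) (Fin 3) ℝ)
    (hR : Rᵀ * R = 1) (hdet : R.det = 1) (h33 : R 2 2 ≠ 1) (c₃ : ℝ) :
    let c : Fin 3 → ℝ :=
      ![R 2 0 * c₃ / (R 2 2 - 1), R 2 1 * c₃ / (R 2 2 - 1), c₃]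
    let F : Matrix (Fin 3) (Fin 3) ℝ := -(crossMat c) * Rᵀ
    F = (c₃ / (R 2 2 - 1)) •
        !![-(R 0 1) - R 1 0, R 0 0 - R 1 1, -(R 2 1);
           R 0 0 - R 1 1,    R 0 1 + R 1 0, R 2 0;
           -(R 1 2),         R 0 2,         0] ∧
      ∃ s : ℝ, (!![F 0 0, F 0 1; F 1 0, F 1 1])ᵀ * !![F 0 0, F 0 1; F 1 0, F 1 1] =
        s • (1 : Matrix (Fin 2) (Fin 2) ℝ) := by
  intro c F
  have hd : R 2 2 - 1 ≠ 0 := sub_ne_zero.mpr h33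
  have hinv : R⁻¹ = Rᵀ := inv_eq_left_inv hR
  have hadj : R.adjugate = Rᵀ := by
    rw [← hinv, Matrix.inv_def, hdet]
    simp
  rw [adjugate_fin_three] at hadj
  have c00 := congrFun (congrFun hadj 0) 0
  have c01 := congrFun (congrFun hadj 1) 0
  have c10 := congrFun (congrFun hadj 0) 1
  have c11 := congrFun (congrFun hadj 1) 1
  have c02 := congrFun (congrFun hadj 2) 0
  have c12 := congrFun (congrFun hadj 2) 1
  simp [Matrix.transpose_apply] at c00 c01 c10 c11 c02 c12
  have hRe : R = !![R 0 0, R 0 1, R 0 2; R 1 0, R 1 1, R 1 2; R 2 0, R 2 1, R 2 2] := by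
    ext i j; fin_cases i <;> fin_cases j <;> rfl
  have hF : F = (c₃ / (R 2 2 - 1)) •
        !![-(R 0 1) - R 1 0, R 0 0 - R 1 1, -(R 2 1);
           R 0 0 - R 1 1,    R 0 1 + R 1 0, R 2 0;
           -(R 1 2),         R 0 2,         0] := by
    show -(crossMat c) * Rᵀ = _
    conv_lhs => rw [hRe]
    exact fund_aux (R 0 0) (R 0 1) (R 0 2) (R 1 0) (R 1 1) (R 1 2) (R 2 0) (R 2 1) (R 2 2)
      c₃ hd c00 c01 c10 c11 c02 c12
  refine ⟨hF, ?_⟩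
  have e00 : F 0 0 = (c₃ / (R 2 2 - 1)) * (-(R 0 1) - R 1 0) := by rw [hF]; simp
  have e01 : F 0 1 = (c₃ / (R 2 2 - 1)) * (R 0 0 - R 1 1) := by rw [hF]; simp
  have e10 : F 1 0 = (c₃ / (R 2 2 - 1)) * (R 0 0 - R 1 1) := by rw [hF]; simp
  have e11 : F 1 1 = (c₃ / (R 2 2 - 1)) * (R 0 1 + R 1 0) := by rw [hF]; simp
  refine ⟨(c₃ / (R 2 2 - 1))^2 * ((R 0 1 + R 1 0)^2 + (R 0 0 - R 1 1)^2), ?_⟩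
  ext i j
  fin_cases i <;> fin_cases j <;>
    simp [Matrix.mul_apply, Fin.sum_univ_two, e00, e01, e10, e11, Matrix.one_apply, Matrix.transpose_apply, Matrix.vecHead, Matrix.vecTail] <;> ring
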